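/- For all s,t ∈ ℕ there exists a function h : ℕ₀ → ℕ₀ such that if G is a graph with no K_{s,t} subgraph, Z,Y₁ ⊆ V(G), ℓ ∈ {0,1,…,s+2}, r ∈ ℕ₀, and L is an (s,Y₁,ℓ,r)-list-assignment of G, then for every (Z,ℓ)-growth L′ of L with associated set Y₁′ the following hold: (1) L′ is an (s,Y₁′,ℓ,r)-list-assignment of G; (2) L′(v) ⊆ L(v) for every v ∈ V(G); (3) |Y₁′| ≤ h(|Y₁ ∪ Z|); (4) for every L′-coloring c′ of G, every monochromatic component M with respect to c′ intersecting Y₁ ∪ Z is contained in G[Y₁′], and if the vertices of M are assigned colors in {ℓ} ∪ {s+3,…,s+2+r} then M ⊆ G[Y₁]; (5) if ℒ is a location in G with Z ⊆ V(A ∩ B) for every (A,B) ∈ ℒ, then |Y₁′ ∩ V(A)| ≤ h(|V(A ∩ B)| + |Y₁ ∩ V(A)|) for every (A,B) ∈ ℒ. -/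

import Mathlib

open SimpleGraph

/-! ## Basic clustered-coloring vocabulary -/

/-- The monochromatic component of `w` under the coloring `c`: the vertex set of the
connected component containing `w` of the subgraph of `G` induced by the color class of `w`. -/
def monoComponent {V : Type*} {α : Type*} (G : SimpleGraph V) (c : V → α) (w : V) : Set V :=
  Subtype.val '' ((G.induce {u | c u = c w}).connectedComponentMk ⟨w, rfl⟩).supp

/-- The coloring `c` of `G` has clustering at most `η`:
every monochromatic component has at most `η` vertices. -/
def HasClusteringAtMost {V : Type*} {α : Type*} (G : SimpleGraph V) (c : V → α) (η : ℕ) : Prop :=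
  ∀ v : V, (monoComponent G c v).ncard ≤ η

/-- `G` is `k`-colorable with clustering `η`. -/
def ColorableClustered {V : Type*} (G : SimpleGraph V) (k η : ℕ) : Prop :=
  ∃ c : V → Fin k, HasClusteringAtMost G c η

/-- `G` contains a subgraph isomorphic to `H`. -/
def HasSubgraphCopy {V W : Type*} (G : SimpleGraph V) (H : SimpleGraph W) : Prop :=
  ∃ f : W ↪ V, ∀ a b, H.Adj a b → G.Adj (f a) (f b)

/-- `H` is a minor of `G`: branch-set definition. -/
def HasMinor {V W : Type*} (G : SimpleGraph V) (H : SimpleGraph W) : Prop :=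
  ∃ β : W → Set V,
    (∀ h, (β h).Nonempty) ∧
    (∀ h, (G.induce (β h)).Connected) ∧
    (∀ h₁ h₂, h₁ ≠ h₂ → Disjoint (β h₁) (β h₂)) ∧
    (∀ h₁ h₂, H.Adj h₁ h₂ → ∃ u ∈ β h₁, ∃ w ∈ β h₂, G.Adj u w)

/-- `G` has an odd `H`-minor: there are pairwise vertex-disjoint nonempty connected branch
subgraphs, a `2`-coloring proper on each branch subgraph, and for each edge of `H` an edge of `G`
between the two branch sets whose ends get the same color. -/
def HasOddMinor {V W : Type*} (G : SimpleGraph V) (H : SimpleGraph W) : Prop :=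
  ∃ (β : W → G.Subgraph) (c : V → Bool),
    (∀ h, (β h).verts.Nonempty) ∧
    (∀ h, (β h).Connected) ∧
    (∀ h₁ h₂, h₁ ≠ h₂ → Disjoint (β h₁).verts (β h₂).verts) ∧
    (∀ h u w, (β h).Adj u w → c u ≠ c w) ∧
    (∀ h₁ h₂, H.Adj h₁ h₂ → ∃ u ∈ (β h₁).verts, ∃ w ∈ (β h₂).verts, G.Adj u w ∧ c u = c w)

/-- `G` has a tree decomposition of width at most `w`. -/
def TreewidthAtMost {V : Type*} (G : SimpleGraph V) (w : ℕ) : Prop :=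
  ∃ (ι : Type) (T : SimpleGraph ι) (X : ι → Set V),
    T.IsTree ∧
    (∀ v : V, (T.induce {i | v ∈ X i}).Connected) ∧
    (∀ u w : V, G.Adj u w → ∃ i, u ∈ X i ∧ w ∈ X i) ∧
    (∀ i, (X i).ncard ≤ w + 1)

/-- `G` has layered treewidth at most `w`: a tree decomposition and a layering such that every
bag meets every layer in at most `w` vertices. -/
def LayeredTreewidthAtMost {V : Type*} (G : SimpleGraph V) (w : ℕ) : Prop :=
  ∃ (ι : Type) (T : SimpleGraph ι) (X : ι → Set V) (lay : V → ℕ),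
    T.IsTree ∧
    (∀ v : V, (T.induce {i | v ∈ X i}).Connected) ∧
    (∀ u w : V, G.Adj u w → ∃ i, u ∈ X i ∧ w ∈ X i) ∧
    (∀ u w : V, G.Adj u w → lay u ≤ lay w + 1 ∧ lay w ≤ lay u + 1) ∧
    (∀ i j, (X i ∩ {v | lay v = j}).ncard ≤ w)

/-- A stable (independent) set of vertices. -/
def IsStableSet {V : Type*} (G : SimpleGraph V) (S : Set V) : Prop :=
  ∀ u ∈ S, ∀ w ∈ S, ¬ G.Adj u w

/-- `N^{≥s}(X)`: vertices outside `X` with at least `s` neighbors in `X`. -/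
def Nge {V : Type*} (G : SimpleGraph V) (s : ℕ) (X : Set V) : Set V :=
  {v | v ∉ X ∧ s ≤ (G.neighborSet v ∩ X).ncard}

/-- `N^{<s}(X)`: vertices outside `X` with at least one but fewer than `s` neighbors in `X`. -/
def Nlt {V : Type*} (G : SimpleGraph V) (s : ℕ) (X : Set V) : Set V :=
  {v | v ∉ X ∧ 1 ≤ (G.neighborSet v ∩ X).ncard ∧ (G.neighborSet v ∩ X).ncard < s}

/-- The closed neighborhood `N_G[X]`. -/
def closedNbhd {V : Type*} (G : SimpleGraph V) (X : Set V) : Set V :=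
  X ∪ {v | ∃ u ∈ X, G.Adj v u}

/-- `c` is an `L`-coloring. -/
def IsLColoring {V : Type*} (L : V → Finset ℤ) (c : V → ℤ) : Prop :=
  ∀ v, c v ∈ L v

/-- `L` is an `(s,r,Y₁)`-list-assignment of `G` (conditions (L1)–(L5)). -/
def IsSRYList {V : Type*} (G : SimpleGraph V) (s r : ℕ) (Y1 : Set V)
    (L : V → Finset ℤ) : Prop :=
  (∀ v, 1 ≤ (L v).card ∧ (L v).card ≤ s + r) ∧
  (Y1 = {v | (L v).card = 1}) ∧
  (∀ y ∈ Nlt G s Y1, (L y).card = s + r - (G.neighborSet y ∩ Y1).ncard ∧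
      ∀ u ∈ G.neighborSet y ∩ Y1, Disjoint (L y) (L u)) ∧
  (∀ v, v ∉ closedNbhd G Y1 → (L v).card = s + r) ∧
  (∀ v, v ∉ Y1 → r + 1 ≤ (L v).card)

/-- An `(η,g)`-bounded `L`-coloring: the union of the monochromatic components meeting
`Y₁ = {v : |L v| = 1}` has at most `|Y₁|² g(|Y₁|)` vertices, and every monochromatic component
has at most `η² g(η)` vertices. -/
def IsBoundedColoring {V : Type*} (G : SimpleGraph V) (L : V → Finset ℤ) (c : V → ℤ)
    (η : ℕ) (g : ℕ → ℕ) : Prop :=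
  (⋃ v ∈ {v | (L v).card = 1}, monoComponent G c v).ncard
      ≤ ({v | (L v).card = 1} : Set V).ncard ^ 2 * g (({v | (L v).card = 1} : Set V).ncard) ∧
  ∀ v, (monoComponent G c v).ncard ≤ η ^ 2 * g η

/-- `L'` is a `(W,F)`-progress of the `(s,·,Y₁)`-list-assignment `L`. -/
def IsProgress {V : Type*} (G : SimpleGraph V) (s : ℕ) (Y1 : Set V) (L : V → Finset ℤ)
    (W : Set V) (F : Finset ℤ) (L' : V → Finset ℤ) : Prop :=
  (∀ y ∈ Y1, L' y = L y) ∧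
  (∀ y ∈ (Y1 ∪ W) \ Y1, (L' y).card = 1 ∧ L' y ⊆ L y \ F) ∧
  (∀ v ∈ Nlt G s (Y1 ∪ W),
    ((L' v : Set ℤ) ⊆ (L v : Set ℤ) \ ⋃ w ∈ G.neighborSet v ∩ (W \ Y1), (L' w : Set ℤ)) ∧
    (L' v).card = (L v).card - (G.neighborSet v ∩ (W \ Y1)).ncard ∧
    (∀ S : Finset ℤ,
      ((S : Set ℤ) ⊆ (L v : Set ℤ) \ ⋃ w ∈ G.neighborSet v ∩ (W \ Y1), (L' w : Set ℤ)) →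
      S.card = (L v).card - (G.neighborSet v ∩ (W \ Y1)).ncard →
      (S ∩ F).card ≤ (L' v ∩ F).card)) ∧
  (∀ v, v ∉ Y1 ∪ W → v ∉ Nlt G s (Y1 ∪ W) → L' v = L v)

/-- A separation of `G`: a pair of edge-disjoint subgraphs whose union is `G`. -/
def IsSeparation {V : Type*} (G : SimpleGraph V) (A B : G.Subgraph) : Prop :=
  A ⊔ B = ⊤ ∧ Disjoint A.edgeSet B.edgeSet

/-- `T` is a tangle of order `θ` in `G`. -/
def IsTangle {V : Type*} (G : SimpleGraph V) (θ : ℕ)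
    (T : Set (G.Subgraph × G.Subgraph)) : Prop :=
  (∀ p ∈ T, IsSeparation G p.1 p.2 ∧ (p.1.verts ∩ p.2.verts).ncard < θ) ∧
  (∀ A B : G.Subgraph, IsSeparation G A B → (A.verts ∩ B.verts).ncard < θ →
      (A, B) ∈ T ∨ (B, A) ∈ T) ∧
  (∀ p₁ ∈ T, ∀ p₂ ∈ T, ∀ p₃ ∈ T,
      (p₁ : G.Subgraph × G.Subgraph).1 ⊔ (p₂ : G.Subgraph × G.Subgraph).1 ⊔
        (p₃ : G.Subgraph × G.Subgraph).1 ≠ ⊤) ∧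
  (∀ p ∈ T, (p : G.Subgraph × G.Subgraph).1.verts ≠ Set.univ)

/-- A location in `G`: a collection of separations with `A ⊆ B'` for distinct members. -/
def IsLocation {V : Type*} (G : SimpleGraph V)
    (Lc : Set (G.Subgraph × G.Subgraph)) : Prop :=
  (∀ p ∈ Lc, IsSeparation G p.1 p.2) ∧
  (∀ p ∈ Lc, ∀ q ∈ Lc, p ≠ q → p.1 ≤ q.2)

/-- `L` is an `(s,Y₁,ℓ,r)`-list-assignment of `G` (conditions (R1)–(R5)). -/
def IsRList {V : Type*} (G : SimpleGraph V) (s : ℕ) (Y1 : Set V) (ℓ r : ℕ)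
    (L : V → Finset ℤ) : Prop :=
  (∀ v, L v ⊆ Finset.Icc (1 : ℤ) ((s : ℤ) + 2 + (r : ℤ))) ∧
  IsSRYList G s (r + 2) Y1 L ∧
  (∀ y ∈ Y1, ∀ x ∈ L y, (x = (ℓ : ℤ) ∨ x ∈ Finset.Icc ((s : ℤ) + 3) ((s : ℤ) + 2 + (r : ℤ))) →
      ∀ w ∈ G.neighborSet y, w ∉ Y1 → x ∉ L w) ∧
  (∀ x ∈ Finset.Icc ((s : ℤ) + 3) ((s : ℤ) + 2 + (r : ℤ)),
      IsStableSet G {y | y ∈ Y1 ∧ x ∈ L y}) ∧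
  (∀ v, v ∉ Y1 →
      ({y | y ∈ G.neighborSet v ∩ Y1 ∧
          L y ⊆ Finset.Icc ((s : ℤ) + 3) ((s : ℤ) + 2 + (r : ℤ))}).ncard
        = r - (L v ∩ Finset.Icc ((s : ℤ) + 3) ((s : ℤ) + 2 + (r : ℤ))).card)

/-- `L'` (with associated set `Y₁'`) is a `(Z,ℓ)`-growth of the `(s,Y₁,ℓ,r)`-list-assignment
`L`.  Indices are shifted by one: `Yseq j` is the paper's `Y₁^{(j-1)}` and `Lseq j` is
`L^{(j-1)}`. -/
def IsZGrowth {V : Type*} (G : SimpleGraph V) (s : ℕ) (Y1 : Set V) (ℓ r : ℕ)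
    (L : V → Finset ℤ) (Z : Set V) (L' : V → Finset ℤ) (Y1' : Set V) : Prop :=
  ∃ (Lseq : ℕ → V → Finset ℤ) (Yseq : ℕ → Set V) (U : ℕ → Set V),
    Lseq 0 = L ∧ Yseq 0 = Y1 ∧ U 0 = Z ∧
    (∀ i, 1 ≤ i → i ≤ s + 2 → U i = Nge G s (Yseq i)) ∧
    (∀ i, i ≤ s + 2 → Yseq (i + 1) = Yseq i ∪ U i) ∧
    (∀ i, i ≤ s + 2 →
      IsProgress G s (Yseq i) (Lseq i) (U i)
        (insert (ℓ : ℤ) (insert (i : ℤ) (Finset.Icc ((s : ℤ) + 3) ((s : ℤ) + 2 + (r : ℤ)))))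
        (Lseq (i + 1)) ∧
      ∀ v, v ∉ Yseq i ∪ U i →
        Lseq (i + 1) v ∩ Finset.Icc ((s : ℤ) + 3) ((s : ℤ) + 2 + (r : ℤ))
          = Lseq i v ∩ Finset.Icc ((s : ℤ) + 3) ((s : ℤ) + 2 + (r : ℤ))) ∧
    L' = Lseq (s + 3) ∧ Y1' = Yseq (s + 3)

/-- The closure of the broom of height `h` with `m` star-leaves, where `a = h - 1`:
the join of a complete graph on `a` vertices (the closure of the path from the root to the
star center) with an edgeless graph on `m` vertices (the star leaves). -/
def broomClosure (a m : ℕ) : SimpleGraph (Fin a ⊕ Fin m) :=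
  SimpleGraph.fromRel (fun x _ => x.isLeft = true)

/-! ## Auxiliary development for stmt18 -/

section Aux18

open Finset in
lemma nge_bound {V : Type} [Fintype V] {s t : ℕ} (ht : 0 < t)
    {G : SimpleGraph V} (hG : ¬ HasSubgraphCopy G (completeBipartiteGraph (Fin s) (Fin t)))
    (X : Set V) : (Nge G s X).ncard ≤ (t - 1) * (X.ncard).choose s := by
  classical
  set XF : Finset V := X.toFinset with hXF
  set NF : Finset V := (Nge G s X).toFinset with hNF
  have hchoice : ∀ v : V, v ∈ NF → ∃ S : Finset V, (S ∈ Finset.powersetCard s XF ∧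
      ∀ u ∈ S, G.Adj v u) := by
    intro v hv
    rw [hNF, Set.mem_toFinset] at hv
    obtain ⟨hvX, hcard⟩ := hv
    have hfin : (G.neighborSet v ∩ X).toFinset.card = (G.neighborSet v ∩ X).ncard := by
      rw [Set.ncard_eq_toFinset_card']
    obtain ⟨S, hS, hScard⟩ := Finset.exists_subset_card_eq
      (show s ≤ (G.neighborSet v ∩ X).toFinset.card by omega)
    refine ⟨S, ⟨?_, ?_⟩⟩
    · rw [Finset.mem_powersetCard]
      refine ⟨fun u hu => ?_, hScard⟩
      have := hS hu; rw [Set.mem_toFinset] at this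
      rw [hXF, Set.mem_toFinset]; exact this.2
    · intro u hu
      have := hS hu; rw [Set.mem_toFinset] at this
      exact this.1
  choose f hf1 hf2 using hchoice
  let g : V → Finset V := fun v => if h : v ∈ NF then f v h else ∅
  have hgmem : ∀ v ∈ NF, g v ∈ Finset.powersetCard s XF := by
    intro v hv; simp only [g, dif_pos hv]; exact hf1 v hv
  have hgadj : ∀ v ∈ NF, ∀ u ∈ g v, G.Adj v u := by
    intro v hv; simp only [g, dif_pos hv]; exact hf2 v hv
  have hfiber : ∀ S ∈ Finset.powersetCard s XF,
      (NF.filter (fun v => g v = S)).card ≤ t - 1 := by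
    intro S hSmem
    by_contra hcon
    push_neg at hcon
    obtain ⟨T, hT, hTcard⟩ := Finset.exists_subset_card_eq
      (show t ≤ (NF.filter (fun v => g v = S)).card by omega)
    have hScard : S.card = s := (Finset.mem_powersetCard.1 hSmem).2
    have hSX : S ⊆ XF := (Finset.mem_powersetCard.1 hSmem).1
    apply hG
    let eS := S.equivFinOfCardEq hScard
    let eT := T.equivFinOfCardEq hTcard
    have hTprop : ∀ v ∈ T, v ∈ NF ∧ g v = S := by
      intro v hv; exact Finset.mem_filter.1 (hT hv)
    have hinj : Function.Injective
        (Sum.elim (fun a : Fin s => (eS.symm a : V)) (fun b : Fin t => (eT.symm b : V))) := by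
      intro x y hxy
      match x, y with
      | Sum.inl a, Sum.inl b =>
        simp only [Sum.elim_inl] at hxy
        have := eS.symm.injective (Subtype.ext hxy); rw [this]
      | Sum.inr a, Sum.inr b =>
        simp only [Sum.elim_inr] at hxy
        have := eT.symm.injective (Subtype.ext hxy); rw [this]
      | Sum.inl a, Sum.inr b =>
        exfalso
        simp only [Sum.elim_inl, Sum.elim_inr] at hxy
        have h1 : ((eS.symm a : V)) ∈ XF := hSX (eS.symm a).2
        have h2 : ((eT.symm b : V)) ∈ NF := (hTprop _ (eT.symm b).2).1
        rw [hXF, Set.mem_toFinset] at h1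
        rw [hNF, Set.mem_toFinset] at h2
        rw [hxy] at h1
        exact h2.1 h1
      | Sum.inr a, Sum.inl b =>
        exfalso
        simp only [Sum.elim_inl, Sum.elim_inr] at hxy
        have h1 : ((eS.symm b : V)) ∈ XF := hSX (eS.symm b).2
        have h2 : ((eT.symm a : V)) ∈ NF := (hTprop _ (eT.symm a).2).1
        rw [hXF, Set.mem_toFinset] at h1
        rw [hNF, Set.mem_toFinset] at h2
        rw [← hxy] at h1
        exact h2.1 h1
    refine ⟨⟨_, hinj⟩, ?_⟩
    intro a b hab
    have hadj : ∀ (i : Fin s) (j : Fin t),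
        G.Adj (Sum.elim (fun a : Fin s => (eS.symm a : V)) (fun b : Fin t => (eT.symm b : V)) (Sum.inl i))
          (Sum.elim (fun a : Fin s => (eS.symm a : V)) (fun b : Fin t => (eT.symm b : V)) (Sum.inr j)) := by
      intro i j
      simp only [Sum.elim_inl, Sum.elim_inr]
      have hv := hTprop _ (eT.symm j).2
      have := hgadj _ hv.1 (eS.symm i : V) (by rw [hv.2]; exact (eS.symm i).2)
      exact this.symm
    match a, b with
    | Sum.inl i, Sum.inr j => exact hadj i j
    | Sum.inr i, Sum.inl j => exact (hadj j i).symm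
    | Sum.inl i, Sum.inl j => simp [completeBipartiteGraph] at hab
    | Sum.inr i, Sum.inr j => simp [completeBipartiteGraph] at hab
  have hcount : NF.card ≤ (Finset.powersetCard s XF).card * (t - 1) := by
    rw [Finset.card_eq_sum_card_fiberwise hgmem]
    calc ∑ S ∈ Finset.powersetCard s XF, (NF.filter (fun v => g v = S)).card
        ≤ ∑ S ∈ Finset.powersetCard s XF, (t - 1) := Finset.sum_le_sum hfiber
      _ = (Finset.powersetCard s XF).card * (t - 1) := by rw [Finset.sum_const, smul_eq_mul]
  rw [Set.ncard_eq_toFinset_card' (Nge G s X), Set.ncard_eq_toFinset_card' X]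
  calc NF.card ≤ (Finset.powersetCard s XF).card * (t-1) := hcount
    _ = (t-1) * XF.card.choose s := by rw [Finset.card_powersetCard, Nat.mul_comm]

variable {V : Type} [Fintype V] {G : SimpleGraph V} {s t r ℓ : ℕ}
  {Y1 Z : Set V} {L : V → Finset ℤ} {Lseq : ℕ → V → Finset ℤ}
  {Yseq : ℕ → Set V} {U : ℕ → Set V}

/-- High colors. -/
noncomputable def highC (s r : ℕ) : Finset ℤ := Finset.Icc ((s : ℤ) + 3) ((s : ℤ) + 2 + (r : ℤ))

/-- Forbidden colors at round `i`. -/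
noncomputable def FC (s r ℓ i : ℕ) : Finset ℤ := insert (ℓ : ℤ) (insert (i : ℤ) (highC s r))


lemma ncard_split {α : Type} [Fintype α] {N W Y : Set α} (h : Y ⊆ W) :
    (N ∩ W).ncard = (N ∩ Y).ncard + (N ∩ (W \ Y)).ncard := by
  rw [← Set.ncard_union_eq (by
      rw [Set.disjoint_left]; rintro x ⟨_, hx⟩ ⟨_, _, hx'⟩; exact hx' hx)
    (Set.toFinite _) (Set.toFinite _)]
  congr 1
  ext x
  constructor
  · rintro ⟨hN, hW⟩
    by_cases hxY : x ∈ Y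
    · exact Or.inl ⟨hN, hxY⟩
    · exact Or.inr ⟨hN, hW, hxY⟩
  · rintro (⟨hN, hY⟩ | ⟨hN, hW, _⟩)
    · exact ⟨hN, h hY⟩
    · exact ⟨hN, hW⟩

lemma ncard_split2 {α : Type} [Fintype α] {N P Q Y : Set α} (hY : Y ⊆ P) :
    (N ∩ ((P ∪ Q) \ Y)).ncard = (N ∩ (P \ Y)).ncard + (N ∩ (Q \ P)).ncard := by
  rw [← Set.ncard_union_eq (by
      rw [Set.disjoint_left]; rintro x ⟨_, hP, _⟩ ⟨_, _, hx'⟩; exact hx' hP)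
    (Set.toFinite _) (Set.toFinite _)]
  congr 1
  ext x
  constructor
  · rintro ⟨hN, hPQ, hxY⟩
    rcases hPQ with hP | hQ
    · exact Or.inl ⟨hN, hP, hxY⟩
    · by_cases hxP : x ∈ P
      · exact Or.inl ⟨hN, hxP, hxY⟩
      · exact Or.inr ⟨hN, hQ, hxP⟩
  · rintro (⟨hN, hP, hxY⟩ | ⟨hN, hQ, hxP⟩)
    · exact ⟨hN, Or.inl hP, hxY⟩
    · exact ⟨hN, Or.inr hQ, fun hxY => hxP (hY hxY)⟩

lemma walk_closed {V : Type} {G : SimpleGraph V} {S T : Set V}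
    (hstep : ∀ a b : V, a ∈ S → b ∈ S → G.Adj a b → a ∈ T → b ∈ T) :
    ∀ (a b : ↥S) (p : (G.induce S).Walk a b), (a : V) ∈ T → (b : V) ∈ T := by
  intro a b p
  induction p with
  | nil => exact id
  | @cons u w _ h p ih => exact fun ha => ih (hstep u.1 w.1 u.2 w.2 h ha)

/-- Step function for the growth bound. -/
def itf (t s m : ℕ) : ℕ → ℕ := fun x => x + m + (t - 1) * Nat.choose x s

lemma itf_mono {t s m : ℕ} {x y : ℕ} (h : x ≤ y) : itf t s m x ≤ itf t s m y := by
  have := Nat.choose_le_choose s h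
  have h2 : (t-1) * x.choose s ≤ (t-1) * y.choose s := Nat.mul_le_mul_left _ this
  unfold itf
  omega

/-- Bundled growth data. -/
structure GD (G : SimpleGraph V) (s ℓ r : ℕ) (Y1 Z : Set V) (L : V → Finset ℤ)
    (Lseq : ℕ → V → Finset ℤ) (Yseq : ℕ → Set V) (U : ℕ → Set V) : Prop where
  h0L : Lseq 0 = L
  h0Y : Yseq 0 = Y1
  h0U : U 0 = Z
  hU : ∀ i, 1 ≤ i → i ≤ s + 2 → U i = Nge G s (Yseq i)
  hY : ∀ i, i ≤ s + 2 → Yseq (i + 1) = Yseq i ∪ U i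
  hP : ∀ i, i ≤ s + 2 →
    IsProgress G s (Yseq i) (Lseq i) (U i) (FC s r ℓ i) (Lseq (i + 1))
  hpres : ∀ i, i ≤ s + 2 → ∀ v, v ∉ Yseq i ∪ U i →
    Lseq (i + 1) v ∩ highC s r = Lseq i v ∩ highC s r
  hRL : IsRList G s Y1 ℓ r L

namespace GD

variable (D : GD G s ℓ r Y1 Z L Lseq Yseq U)
include D

lemma Ymono : ∀ {i j : ℕ}, i ≤ j → j ≤ s + 3 → Yseq i ⊆ Yseq j := by
  intro i j hij hj
  induction j with
  | zero => cases Nat.le_zero.1 hij; exact fun _ h => h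
  | succ k ih =>
    rcases Nat.lt_or_ge i (k+1) with h | h
    · intro x hx
      have hk : k ≤ s + 2 := by omega
      rw [D.hY k hk]
      exact Or.inl (ih (by omega) (by omega) hx)
    · have : i = k + 1 := by omega
      subst this; exact fun _ h => h

lemma Lstep : ∀ i ≤ s + 2, ∀ v, Lseq (i + 1) v ⊆ Lseq i v := by
  intro i hi v
  obtain ⟨c1, c2, c3, c4⟩ := D.hP i hi
  by_cases h1 : v ∈ Yseq i
  · rw [c1 v h1]
  · by_cases h2 : v ∈ Yseq i ∪ U i
    · have := (c2 v ⟨h2, h1⟩).2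
      exact fun x hx => (Finset.mem_sdiff.1 (this hx)).1
    · by_cases h3 : v ∈ Nlt G s (Yseq i ∪ U i)
      · have := (c3 v h3).1
        intro x hx
        have := this (by exact_mod_cast hx)
        rw [Set.mem_diff] at this
        exact_mod_cast this.1
      · rw [c4 v h2 h3]

lemma Lmono : ∀ {i j : ℕ}, i ≤ j → j ≤ s + 3 → ∀ v, Lseq j v ⊆ Lseq i v := by
  intro i j hij hj v
  induction j with
  | zero => cases Nat.le_zero.1 hij; exact fun _ h => h
  | succ k ih =>
    rcases Nat.lt_or_ge i (k+1) with h | h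
    · exact fun x hx => ih (by omega) (by omega) (D.Lstep k (by omega) v hx)
    · have : i = k + 1 := by omega
      subst this; exact fun _ h => h

lemma Lfix : ∀ {i j : ℕ}, i ≤ j → j ≤ s + 3 → ∀ v ∈ Yseq i, Lseq j v = Lseq i v := by
  intro i j hij hj v hv
  induction j with
  | zero => cases Nat.le_zero.1 hij; rfl
  | succ k ih =>
    rcases Nat.lt_or_ge i (k+1) with h | h
    · obtain ⟨c1, _, _, _⟩ := D.hP k (by omega)
      rw [c1 v (D.Ymono (show i ≤ k by omega) (by omega) hv)]
      exact ih (by omega) (by omega)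
    · have : i = k + 1 := by omega
      subst this; rfl

lemma birth : ∀ {m : ℕ}, m ≤ s + 3 → ∀ {u : V}, u ∈ Yseq m → u ∉ Y1 →
    ∃ i, i ≤ s + 2 ∧ i + 1 ≤ m ∧ u ∈ U i ∧ u ∉ Yseq i := by
  intro m hm u hu hY1
  induction m with
  | zero => exact absurd (D.h0Y ▸ hu) hY1
  | succ k ih =>
    rw [D.hY k (by omega)] at hu
    rcases hu with hu | hu
    · obtain ⟨i, h1, h2, h3, h4⟩ := ih (by omega) hu
      exact ⟨i, h1, by omega, h3, h4⟩
    · by_cases hk : u ∈ Yseq k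
      · obtain ⟨i, h1, h2, h3, h4⟩ := ih (by omega) hk
        exact ⟨i, h1, by omega, h3, h4⟩
      · exact ⟨k, by omega, le_refl _, hu, hk⟩

lemma birth_prop : ∀ {i : ℕ}, i ≤ s + 2 → ∀ {u : V}, u ∈ U i → u ∉ Yseq i →
    u ∈ Yseq (i + 1) ∧ (Lseq (s + 3) u).card = 1 ∧
      Lseq (s + 3) u ⊆ Lseq i u \ FC s r ℓ i := by
  intro i hi u hU hY
  have hmem : u ∈ Yseq (i + 1) := by rw [D.hY i hi]; exact Or.inr hU
  obtain ⟨c1, c2, c3, c4⟩ := D.hP i hi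
  have h2 := c2 u ⟨Or.inr hU, hY⟩
  have hfix : Lseq (s + 3) u = Lseq (i + 1) u := D.Lfix (le_refl _) (by omega) u hmem ▸ by
    exact D.Lfix (show i + 1 ≤ s + 3 by omega) (le_refl _) u (D.Ymono (by omega) (by omega) hmem)
  rw [hfix]
  exact ⟨hmem, h2.1, h2.2⟩

lemma deg_lt : ∀ {v : V}, v ∉ Yseq (s + 3) → ∀ {j : ℕ}, 1 ≤ j → j ≤ s + 2 →
    (G.neighborSet v ∩ Yseq j).ncard < s := by
  intro v hv j hj1 hj2
  by_contra hcon
  push_neg at hcon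
  have hvj : v ∉ Yseq j := fun h => hv (D.Ymono (by omega) (le_refl _) h)
  have : v ∈ U j := by
    rw [D.hU j hj1 hj2]; exact ⟨hvj, hcon⟩
  have : v ∈ Yseq (j + 1) := by rw [D.hY j hj2]; exact Or.inr this
  exact hv (D.Ymono (by omega) (le_refl _) this)

lemma cardL : ∀ {v : V}, v ∉ Yseq (s + 3) →
    (L v).card + (G.neighborSet v ∩ Y1).ncard = s + r + 2 ∧
    (G.neighborSet v ∩ Y1).ncard < s := by
  intro v hv
  have hvY1 : v ∉ Y1 := fun h => hv (D.Ymono (by omega) (le_refl _) (D.h0Y ▸ h))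
  have hd : (G.neighborSet v ∩ Y1).ncard < s := by
    have h1 : (G.neighborSet v ∩ Y1).ncard ≤ (G.neighborSet v ∩ Yseq 1).ncard := by
      apply Set.ncard_le_ncard _ (Set.toFinite _)
      intro x ⟨hx1, hx2⟩
      exact ⟨hx1, D.Ymono (by omega) (by omega) (D.h0Y ▸ hx2)⟩
    have := D.deg_lt hv (le_refl 1) (by omega)
    omega
  obtain ⟨hR1, hSRY, hR3, hR4, hR5⟩ := D.hRL
  obtain ⟨hA, hB, hC, hD4, hE⟩ := hSRY
  refine ⟨?_, hd⟩
  by_cases hd0 : (G.neighborSet v ∩ Y1).ncard = 0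
  · have hemp : G.neighborSet v ∩ Y1 = ∅ := (Set.ncard_eq_zero (Set.toFinite _)).1 hd0
    have hcl : v ∉ closedNbhd G Y1 := by
      rintro (h | ⟨u, hu1, hu2⟩)
      · exact hvY1 h
      · have : u ∈ G.neighborSet v ∩ Y1 := ⟨hu2, hu1⟩
        rw [hemp] at this; exact this
    have := hD4 v hcl
    omega
  · have hnlt : v ∈ Nlt G s Y1 := ⟨hvY1, by omega, hd⟩
    have := (hC v hnlt).1
    omega

lemma inv : ∀ {v : V}, v ∉ Yseq (s + 3) → ∀ {m : ℕ}, m ≤ s + 2 →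
    (Lseq m v).card + (G.neighborSet v ∩ (Yseq m \ Y1)).ncard = (L v).card ∧
    (G.neighborSet v ∩ Y1).ncard + (G.neighborSet v ∩ (Yseq m \ Y1)).ncard < s := by
  intro v hv m hm
  induction m with
  | zero =>
    rw [D.h0L, D.h0Y]
    have : Y1 \ Y1 = (∅ : Set V) := by simp
    rw [this]
    have h0 : (G.neighborSet v ∩ (∅ : Set V)).ncard = 0 := by simp
    rw [h0]
    have := D.cardL hv
    omega
  | succ m ih =>
    obtain ⟨ih1, ih2⟩ := ih (by omega)
    have hY1sub : Y1 ⊆ Yseq m := D.h0Y ▸ D.Ymono (by omega) (by omega)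
    have hcard := D.cardL hv
    have hsplit2 : (G.neighborSet v ∩ (Yseq (m+1) \ Y1)).ncard
        = (G.neighborSet v ∩ (Yseq m \ Y1)).ncard + (G.neighborSet v ∩ (U m \ Yseq m)).ncard := by
      rw [D.hY m (by omega)]
      exact ncard_split2 hY1sub
    have hsplit : (G.neighborSet v ∩ Yseq (m+1)).ncard
        = (G.neighborSet v ∩ Y1).ncard + (G.neighborSet v ∩ (Yseq (m+1) \ Y1)).ncard :=
      ncard_split (D.h0Y ▸ D.Ymono (by omega) (by omega))
    have hvm1 : v ∉ Yseq (m + 1) := fun h => hv (D.Ymono (by omega) (le_refl _) h)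
    obtain ⟨c1, c2, c3, c4⟩ := D.hP m (by omega)
    by_cases hA : G.neighborSet v ∩ Yseq (m + 1) = ∅
    · have hz1 : (G.neighborSet v ∩ (Yseq (m+1) \ Y1)).ncard = 0 := by
        rw [Set.ncard_eq_zero (Set.toFinite _)]
        apply Set.eq_empty_of_subset_empty
        rw [← hA]; exact fun x ⟨h1, h2, _⟩ => ⟨h1, h2⟩
      have heq : Lseq (m + 1) v = Lseq m v := by
        apply c4 v (by rw [← D.hY m (by omega)]; exact hvm1)
        rintro ⟨_, h1, _⟩
        have hz : (G.neighborSet v ∩ (Yseq m ∪ U m)).ncard = 0 := by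
          rw [← D.hY m (by omega), hA]; simp
        omega
      rw [heq, hz1]
      omega
    · have hA1 : 1 ≤ (G.neighborSet v ∩ Yseq (m+1)).ncard := by
        rw [Nat.one_le_iff_ne_zero]
        intro h; exact hA ((Set.ncard_eq_zero (Set.toFinite _)).1 h)
      have hAs : (G.neighborSet v ∩ Yseq (m+1)).ncard < s := by
        by_contra hcon
        push_neg at hcon
        have : v ∈ U (m + 1) := by
          rw [D.hU (m+1) (by omega) (by omega)]
          exact ⟨hvm1, hcon⟩
        have : v ∈ Yseq (m + 2) := by rw [D.hY (m+1) (by omega)]; exact Or.inr this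
        exact hv (D.Ymono (by omega) (le_refl _) this)
      have hnlt : v ∈ Nlt G s (Yseq m ∪ U m) := by
        rw [← D.hY m (by omega)]
        exact ⟨hvm1, hA1, hAs⟩
      have hcard3 := (c3 v hnlt).2.1
      omega

lemma final_nlt : ∀ {v : V}, v ∈ Nlt G s (Yseq (s + 3)) →
    (Lseq (s + 3) v).card + (G.neighborSet v ∩ Yseq (s + 3)).ncard = s + r + 2 := by
  intro v hnlt
  obtain ⟨hv, hA1, hAs⟩ := hnlt
  obtain ⟨ih1, ih2⟩ := D.inv hv (le_refl _)
  have hcard := D.cardL hv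
  have hY1sub : Y1 ⊆ Yseq (s+2) := D.h0Y ▸ D.Ymono (by omega) (by omega)
  have hsplit2 : (G.neighborSet v ∩ (Yseq (s+3) \ Y1)).ncard
      = (G.neighborSet v ∩ (Yseq (s+2) \ Y1)).ncard + (G.neighborSet v ∩ (U (s+2) \ Yseq (s+2))).ncard := by
    rw [show s + 3 = (s+2) + 1 from rfl, D.hY (s+2) (le_refl _)]
    exact ncard_split2 hY1sub
  have hsplit : (G.neighborSet v ∩ Yseq (s+3)).ncard
      = (G.neighborSet v ∩ Y1).ncard + (G.neighborSet v ∩ (Yseq (s+3) \ Y1)).ncard :=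
    ncard_split (D.h0Y ▸ D.Ymono (by omega) (by omega))
  obtain ⟨c1, c2, c3, c4⟩ := D.hP (s+2) (le_refl _)
  have hnlt' : v ∈ Nlt G s (Yseq (s+2) ∪ U (s+2)) := by
    rw [← D.hY (s+2) (le_refl _)]
    exact ⟨hv, hA1, hAs⟩
  have hcard3 := (c3 v hnlt').2.1
  have hconv : (Lseq (s+3) v).card = (Lseq (s+2+1) v).card := rfl
  omega

lemma final_card : ∀ {v : V}, v ∉ Yseq (s + 3) → r + 3 ≤ (Lseq (s + 3) v).card := by
  intro v hv
  obtain ⟨ih1, ih2⟩ := D.inv hv (le_refl _)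
  have hcard := D.cardL hv
  by_cases hA : G.neighborSet v ∩ Yseq (s + 3) = ∅
  · obtain ⟨c1, c2, c3, c4⟩ := D.hP (s+2) (le_refl _)
    have heq : Lseq (s + 3) v = Lseq (s+2) v := by
      apply c4 v (by rw [← D.hY (s+2) (le_refl _)]; exact hv)
      rintro ⟨_, h1, _⟩
      have hz : (G.neighborSet v ∩ (Yseq (s+2) ∪ U (s+2))).ncard = 0 := by
        rw [← D.hY (s+2) (le_refl _)]
        rw [show (s+2)+1 = s+3 from rfl, hA]; simp
      omega
    rw [heq]
    omega
  · have hA1 : 1 ≤ (G.neighborSet v ∩ Yseq (s+3)).ncard := by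
      rw [Nat.one_le_iff_ne_zero]
      intro h; exact hA ((Set.ncard_eq_zero (Set.toFinite _)).1 h)
    by_cases hAs : (G.neighborSet v ∩ Yseq (s+3)).ncard < s
    · have := D.final_nlt ⟨hv, hA1, hAs⟩
      omega
    · obtain ⟨c1, c2, c3, c4⟩ := D.hP (s+2) (le_refl _)
      have heq : Lseq (s + 3) v = Lseq (s+2) v := by
        apply c4 v (by rw [← D.hY (s+2) (le_refl _)]; exact hv)
        rintro ⟨_, _, h2⟩
        rw [← D.hY (s+2) (le_refl _)] at h2
        exact hAs h2
      rw [heq]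
      omega

lemma final_l4 : ∀ {v : V}, v ∉ Yseq (s + 3) → G.neighborSet v ∩ Yseq (s + 3) = ∅ →
    (Lseq (s + 3) v).card = s + r + 2 := by
  intro v hv hA
  obtain ⟨ih1, ih2⟩ := D.inv hv (le_refl _)
  have hcard := D.cardL hv
  have hz1 : (G.neighborSet v ∩ (Yseq (s+2) \ Y1)).ncard = 0 := by
    rw [Set.ncard_eq_zero (Set.toFinite _)]
    apply Set.eq_empty_of_subset_empty
    rw [← hA]
    exact fun x ⟨h1, h2, _⟩ => ⟨h1, D.Ymono (by omega) (le_refl _) h2⟩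
  have hd0 : (G.neighborSet v ∩ Y1).ncard = 0 := by
    rw [Set.ncard_eq_zero (Set.toFinite _)]
    apply Set.eq_empty_of_subset_empty
    rw [← hA]
    exact fun x ⟨h1, h2⟩ => ⟨h1, D.Ymono (by omega) (le_refl _) (D.h0Y ▸ h2)⟩
  obtain ⟨c1, c2, c3, c4⟩ := D.hP (s+2) (le_refl _)
  have heq : Lseq (s + 3) v = Lseq (s+2) v := by
    apply c4 v (by rw [← D.hY (s+2) (le_refl _)]; exact hv)
    rintro ⟨_, h1, _⟩
    have hz : (G.neighborSet v ∩ (Yseq (s+2) ∪ U (s+2))).ncard = 0 := by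
      rw [← D.hY (s+2) (le_refl _)]
      rw [show (s+2)+1 = s+3 from rfl, hA]; simp
    omega
  rw [heq]
  omega

lemma nlt_excl : ∀ {i : ℕ}, i ≤ s + 2 → ∀ {u v : V}, u ∈ U i → u ∉ Yseq i →
    G.Adj v u → v ∈ Nlt G s (Yseq (i + 1)) →
    ∀ x ∈ Lseq (s + 3) u, x ∉ Lseq (s + 3) v := by
  intro i hi u v hU hnY hadj hnlt x hxu hxv
  obtain ⟨c1, c2, c3, c4⟩ := D.hP i hi
  rw [D.hY i hi] at hnlt
  have hsub := (c3 v hnlt).1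
  have hfixu : Lseq (s + 3) u = Lseq (i + 1) u := by
    apply D.Lfix (show i + 1 ≤ s + 3 by omega) (le_refl _)
    rw [D.hY i hi]; exact Or.inr hU
  have hxu' : x ∈ Lseq (i + 1) u := hfixu ▸ hxu
  have hxv' : x ∈ Lseq (i + 1) v := D.Lmono (show i + 1 ≤ s + 3 by omega) (le_refl _) v hxv
  have hmem : (x : ℤ) ∈ (↑(Lseq (i+1) v) : Set ℤ) := hxv'
  have := hsub hmem
  rw [Set.mem_diff] at this
  apply this.2
  apply Set.mem_biUnion (show u ∈ G.neighborSet v ∩ (U i \ Yseq i) from ⟨hadj, hU, hnY⟩)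
  exact hxu'

lemma final_disj : ∀ {v : V}, v ∈ Nlt G s (Yseq (s + 3)) →
    ∀ u, u ∈ G.neighborSet v ∩ Yseq (s + 3) → Disjoint (Lseq (s + 3) v) (Lseq (s + 3) u) := by
  intro v hnlt u hu
  obtain ⟨hvn, hn1, hns⟩ := hnlt
  obtain ⟨hu1, hu2⟩ := hu
  have hvY1 : v ∉ Y1 := fun h => hvn (D.Ymono (by omega) (le_refl _) (D.h0Y ▸ h))
  by_cases huY1 : u ∈ Y1
  · have hd1 : 1 ≤ (G.neighborSet v ∩ Y1).ncard := by
      rw [Nat.one_le_iff_ne_zero]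
      intro h
      have := (Set.ncard_eq_zero (Set.toFinite _)).1 h
      rw [Set.eq_empty_iff_forall_notMem] at this
      exact this u ⟨hu1, huY1⟩
    have hds : (G.neighborSet v ∩ Y1).ncard < s := by
      have hle : (G.neighborSet v ∩ Y1).ncard ≤ (G.neighborSet v ∩ Yseq (s+3)).ncard := by
        apply Set.ncard_le_ncard _ (Set.toFinite _)
        exact fun x ⟨h1, h2⟩ => ⟨h1, D.Ymono (by omega) (le_refl _) (D.h0Y ▸ h2)⟩
      omega
    have hnltY1 : v ∈ Nlt G s Y1 := ⟨hvY1, hd1, hds⟩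
    obtain ⟨_, hSRY, _, _, _⟩ := D.hRL
    obtain ⟨_, _, hC, _, _⟩ := hSRY
    have hdisj : Disjoint (L v) (L u) := (hC v hnltY1).2 u ⟨hu1, huY1⟩
    have hsubv : Lseq (s + 3) v ⊆ L v := by
      have := D.Lmono (Nat.zero_le (s+3)) (le_refl _) v
      rw [D.h0L] at this; exact this
    have hequ : Lseq (s + 3) u = L u := by
      have := D.Lfix (Nat.zero_le (s+3)) (le_refl _) u (D.h0Y ▸ huY1)
      rw [D.h0L] at this; exact this
    rw [hequ]
    exact hdisj.mono hsubv (le_refl _)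
  · obtain ⟨i, hi1, hi2, hUi, hYi⟩ := D.birth (le_refl (s+3)) hu2 huY1
    have hui1 : u ∈ Yseq (i + 1) := by rw [D.hY i hi1]; exact Or.inr hUi
    have hvi : v ∉ Yseq (i + 1) := fun h => hvn (D.Ymono hi2 (le_refl _) h)
    have hnz : 1 ≤ (G.neighborSet v ∩ Yseq (i+1)).ncard := by
      rw [Nat.one_le_iff_ne_zero]
      intro h
      have := (Set.ncard_eq_zero (Set.toFinite _)).1 h
      rw [Set.eq_empty_iff_forall_notMem] at this
      exact this u ⟨hu1, hui1⟩
    have hlt : (G.neighborSet v ∩ Yseq (i+1)).ncard < s := by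
      have hle : (G.neighborSet v ∩ Yseq (i+1)).ncard ≤ (G.neighborSet v ∩ Yseq (s+3)).ncard := by
        apply Set.ncard_le_ncard _ (Set.toFinite _)
        exact fun x ⟨h1, h2⟩ => ⟨h1, D.Ymono hi2 (le_refl _) h2⟩
      omega
    have hexcl := D.nlt_excl hi1 hUi hYi hu1 ⟨hvi, hnz, hlt⟩
    rw [Finset.disjoint_right]
    exact fun a ha => hexcl a ha

lemma hipres : ∀ {v : V}, v ∉ Yseq (s + 3) →
    Lseq (s + 3) v ∩ highC s r = L v ∩ highC s r := by
  intro v hv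
  have key : ∀ m, m ≤ s + 3 → Lseq m v ∩ highC s r = L v ∩ highC s r := by
    intro m hm
    induction m with
    | zero => rw [D.h0L]
    | succ k ih =>
      have hk : k ≤ s + 2 := by omega
      have hnot : v ∉ Yseq k ∪ U k := by
        rw [← D.hY k hk]
        exact fun h => hv (D.Ymono (by omega) (le_refl _) h)
      rw [D.hpres k hk v hnot, ih (by omega)]
  exact key (s+3) (le_refl _)

lemma step_low (c' : V → ℤ) (hc' : IsLColoring (Lseq (s + 3)) c') :
    ∀ {n : ℕ}, 1 ≤ n → n ≤ s + 2 → ∀ {u v : V}, G.Adj u v →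
    c' u = (n : ℤ) → c' v = (n : ℤ) → u ∈ Yseq n → v ∈ Yseq n := by
  intro n hn1 hn2 u v hadj hcu hcv huY
  by_contra hvY
  have hstep_a : v ∉ Yseq (n + 1) := by
    intro hmem
    rw [D.hY n hn2] at hmem
    have hvU : v ∈ U n := by
      rcases hmem with h | h
      · exact absurd h hvY
      · exact h
    obtain ⟨c1, c2, c3, c4⟩ := D.hP n hn2
    have h2 := c2 v ⟨Or.inr hvU, hvY⟩
    have hcmem : c' v ∈ Lseq (s+3) v := hc' v
    have hcmem' : c' v ∈ Lseq (n+1) v := D.Lmono (show n+1 ≤ s+3 by omega) (le_refl _) v hcmem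
    have := h2.2 hcmem'
    rw [Finset.mem_sdiff] at this
    apply this.2
    rw [hcv]
    exact Finset.mem_insert_of_mem (Finset.mem_insert_self _ _)
  have hvY1 : v ∉ Y1 := fun h => hvY (D.Ymono (Nat.zero_le n) (by omega) (D.h0Y ▸ h))
  by_cases huY1 : u ∈ Y1
  · by_cases hds : s ≤ (G.neighborSet v ∩ Y1).ncard
    · have hvY1' : v ∉ Yseq 1 := fun h => hvY (D.Ymono hn1 (by omega) h)
      have hge : v ∈ Nge G s (Yseq 1) := by
        refine ⟨hvY1', le_trans hds ?_⟩
        apply Set.ncard_le_ncard _ (Set.toFinite _)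
        exact fun x ⟨h1, h2⟩ => ⟨h1, D.Ymono (Nat.zero_le 1) (by omega) (D.h0Y ▸ h2)⟩
      rw [← D.hU 1 (le_refl 1) (by omega)] at hge
      have : v ∈ Yseq 2 := by rw [D.hY 1 (by omega)]; exact Or.inr hge
      exact hstep_a (D.Ymono (show 2 ≤ n+1 by omega) (by omega) this)
    · push_neg at hds
      have hd1 : 1 ≤ (G.neighborSet v ∩ Y1).ncard := by
        rw [Nat.one_le_iff_ne_zero]
        intro h
        have := (Set.ncard_eq_zero (Set.toFinite _)).1 h
        rw [Set.eq_empty_iff_forall_notMem] at this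
        exact this u ⟨hadj.symm, huY1⟩
      have hnltY1 : v ∈ Nlt G s Y1 := ⟨hvY1, hd1, hds⟩
      obtain ⟨_, hSRY, _, _, _⟩ := D.hRL
      obtain ⟨_, _, hC, _, _⟩ := hSRY
      have hdisj : Disjoint (L v) (L u) := (hC v hnltY1).2 u ⟨hadj.symm, huY1⟩
      have hcvL : c' v ∈ L v := by
        have := D.Lmono (Nat.zero_le (s+3)) (le_refl _) v (hc' v)
        rw [D.h0L] at this; exact this
      have hcuL : c' u ∈ L u := by
        have heq := D.Lfix (Nat.zero_le (s+3)) (le_refl _) u (D.h0Y ▸ huY1)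
        rw [D.h0L] at heq
        rw [← heq]; exact hc' u
      rw [Finset.disjoint_left] at hdisj
      apply hdisj hcvL
      rw [hcv, ← hcu]
      exact hcuL
  · obtain ⟨i, hi1, hi2, hUi, hYi⟩ := D.birth (show n ≤ s + 3 by omega) huY huY1
    have hui1 : u ∈ Yseq (i + 1) := by rw [D.hY i hi1]; exact Or.inr hUi
    have hvi : v ∉ Yseq (i + 1) := fun h => hvY (D.Ymono hi2 (by omega) h)
    have hnz : 1 ≤ (G.neighborSet v ∩ Yseq (i+1)).ncard := by
      rw [Nat.one_le_iff_ne_zero]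
      intro h
      have := (Set.ncard_eq_zero (Set.toFinite _)).1 h
      rw [Set.eq_empty_iff_forall_notMem] at this
      exact this u ⟨hadj.symm, hui1⟩
    by_cases hlt : (G.neighborSet v ∩ Yseq (i+1)).ncard < s
    · have hexcl := D.nlt_excl hi1 hUi hYi hadj.symm ⟨hvi, hnz, hlt⟩
      apply hexcl (c' u) (hc' u)
      rw [hcu, ← hcv]
      exact hc' v
    · push_neg at hlt
      have hge : v ∈ Nge G s (Yseq (i+1)) := ⟨hvi, hlt⟩
      rw [← D.hU (i+1) (by omega) (by omega)] at hge
      have : v ∈ Yseq (i + 2) := by rw [D.hY (i+1) (by omega)]; exact Or.inr hge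
      exact hstep_a (D.Ymono (show i + 2 ≤ n + 1 by omega) (by omega) this)

lemma step_high (c' : V → ℤ) (hc' : IsLColoring (Lseq (s + 3)) c') :
    ∀ {u v : V}, G.Adj u v → c' u = c' v →
    (c' u = (ℓ : ℤ) ∨ c' u ∈ highC s r) → u ∈ Y1 → v ∈ Y1 := by
  intro u v hadj hceq hcol huY1
  by_contra hvY1
  obtain ⟨_, _, hR3, _, _⟩ := D.hRL
  have hcuL : c' u ∈ L u := by
    have heq := D.Lfix (Nat.zero_le (s+3)) (le_refl _) u (D.h0Y ▸ huY1)
    rw [D.h0L] at heq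
    rw [← heq]; exact hc' u
  have hnot := hR3 u huY1 (c' u) hcuL hcol v hadj hvY1
  apply hnot
  have hcvL : c' v ∈ L v := by
    have := D.Lmono (Nat.zero_le (s+3)) (le_refl _) v (hc' v)
    rw [D.h0L] at this; exact this
  rw [hceq]
  exact hcvL

lemma part2 : ∀ v, Lseq (s + 3) v ⊆ L v := by
  intro v
  have := D.Lmono (Nat.zero_le (s+3)) (le_refl _) v
  rw [D.h0L] at this
  exact this

lemma part1 : IsRList G s (Yseq (s + 3)) ℓ r (Lseq (s + 3)) := by
  obtain ⟨hR1, hSRY, hR3, hR4, hR5⟩ := D.hRL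
  obtain ⟨hA, hB, hC, hD4, hE⟩ := hSRY
  -- list equality on Y1
  have hfixY1 : ∀ y ∈ Y1, Lseq (s + 3) y = L y := by
    intro y hy
    have := D.Lfix (Nat.zero_le (s+3)) (le_refl _) y (D.h0Y ▸ hy)
    rw [D.h0L] at this; exact this
  -- born vertices: singleton avoiding FC
  have hborn : ∀ y ∈ Yseq (s + 3), y ∉ Y1 → ∃ i, i ≤ s + 2 ∧
      (Lseq (s + 3) y).card = 1 ∧ Lseq (s + 3) y ⊆ Lseq i y \ FC s r ℓ i := by
    intro y hy hy1
    obtain ⟨i, hi1, hi2, hUi, hYi⟩ := D.birth (le_refl _) hy hy1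
    obtain ⟨_, h2, h3⟩ := D.birth_prop hi1 hUi hYi
    exact ⟨i, hi1, h2, h3⟩
  -- membership of Yseq (s+3) gives card = 1
  have hcard1 : ∀ y ∈ Yseq (s + 3), (Lseq (s + 3) y).card = 1 := by
    intro y hy
    by_cases hy1 : y ∈ Y1
    · rw [hfixY1 y hy1]
      have : y ∈ {v | (L v).card = 1} := hB ▸ hy1
      exact this
    · obtain ⟨i, _, h2, _⟩ := hborn y hy hy1
      exact h2
  -- high colors not in born lists
  have hnothigh : ∀ y ∈ Yseq (s + 3), y ∉ Y1 → ∀ x ∈ Lseq (s + 3) y,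
      x ≠ (ℓ : ℤ) ∧ x ∉ Finset.Icc ((s : ℤ) + 3) ((s : ℤ) + 2 + (r : ℤ)) := by
    intro y hy hy1 x hx
    obtain ⟨i, hi1, _, h3⟩ := hborn y hy hy1
    have := h3 hx
    rw [Finset.mem_sdiff] at this
    have hnF := this.2
    constructor
    · intro heq; exact hnF (by rw [heq]; exact Finset.mem_insert_self _ _)
    · intro hmem
      exact hnF (Finset.mem_insert_of_mem (Finset.mem_insert_of_mem (by exact hmem)))
  refine ⟨?_, ⟨?_, ?_, ?_, ?_, ?_⟩, ?_, ?_, ?_⟩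
  · -- R1
    intro v
    exact fun x hx => hR1 v (D.part2 v hx)
  · -- L1
    intro v
    constructor
    · by_cases hv : v ∈ Yseq (s + 3)
      · rw [hcard1 v hv]
      · have := D.final_card hv; omega
    · have := (hA v).2
      have hle := Finset.card_le_card (D.part2 v)
      omega
  · -- L2
    ext v
    constructor
    · intro hv; exact hcard1 v hv
    · intro hv
      by_contra hcon
      have h1 := D.final_card hcon
      have h2 : (Lseq (s+3) v).card = 1 := hv
      omega
  · -- L3
    intro y hy
    refine ⟨?_, ?_⟩
    · have := D.final_nlt hy
      omega
    · exact fun u hu => D.final_disj hy u hu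
  · -- L4
    intro v hv
    have hv1 : v ∉ Yseq (s + 3) := fun h => hv (Or.inl h)
    have hemp : G.neighborSet v ∩ Yseq (s + 3) = ∅ := by
      rw [Set.eq_empty_iff_forall_notMem]
      rintro u ⟨h1, h2⟩
      exact hv (Or.inr ⟨u, h2, h1⟩)
    have := D.final_l4 hv1 hemp
    omega
  · -- L5
    intro v hv
    have := D.final_card hv
    omega
  · -- R3
    intro y hy x hx hxcol w hw hwY
    have hwY1 : w ∉ Y1 := fun h => hwY (D.Ymono (Nat.zero_le _) (le_refl _) (D.h0Y ▸ h))
    by_cases hy1 : y ∈ Y1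
    · rw [hfixY1 y hy1] at hx
      have := hR3 y hy1 x hx hxcol w hw hwY1
      exact fun hc => this (D.part2 w hc)
    · obtain ⟨hne, hni⟩ := hnothigh y hy hy1 x hx
      rcases hxcol with h | h
      · exact absurd h hne
      · exact absurd h hni
  · -- R4
    intro x hx
    intro u hu w hw
    have hsub : ∀ a, a ∈ {y | y ∈ Yseq (s+3) ∧ x ∈ Lseq (s+3) y} → a ∈ Y1 ∧ x ∈ L a := by
      rintro a ⟨ha1, ha2⟩
      by_cases ha : a ∈ Y1
      · exact ⟨ha, (hfixY1 a ha) ▸ ha2⟩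
      · exact absurd hx (hnothigh a ha1 ha x ha2).2
    have h1 := hsub u hu
    have h2 := hsub w hw
    exact hR4 x hx u h1 w h2
  · -- R5
    intro v hv
    have hvY1 : v ∉ Y1 := fun h => hv (D.Ymono (Nat.zero_le _) (le_refl _) (D.h0Y ▸ h))
    have hseteq : {y | y ∈ G.neighborSet v ∩ Yseq (s+3) ∧
        Lseq (s+3) y ⊆ Finset.Icc ((s:ℤ)+3) ((s:ℤ)+2+(r:ℤ))}
        = {y | y ∈ G.neighborSet v ∩ Y1 ∧ L y ⊆ Finset.Icc ((s:ℤ)+3) ((s:ℤ)+2+(r:ℤ))} := by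
      ext y
      constructor
      · rintro ⟨⟨hn, hys⟩, hsub⟩
        by_cases hy1 : y ∈ Y1
        · exact ⟨⟨hn, hy1⟩, (hfixY1 y hy1) ▸ hsub⟩
        · exfalso
          have hc1 := hcard1 y hys
          obtain ⟨e, he⟩ := Finset.card_pos.1 (show 0 < (Lseq (s+3) y).card by omega)
          exact (hnothigh y hys hy1 e he).2 (hsub he)
      · rintro ⟨⟨hn, hy1⟩, hsub⟩
        refine ⟨⟨hn, D.Ymono (Nat.zero_le _) (le_refl _) (D.h0Y ▸ hy1)⟩, ?_⟩
        rw [hfixY1 y hy1]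
        exact hsub
    rw [hseteq]
    have hhi := D.hipres hv
    unfold highC at hhi
    rw [hhi]
    exact hR5 v hvY1

lemma part3 (hG : ¬ HasSubgraphCopy G (completeBipartiteGraph (Fin s) (Fin t)))
    (ht : 0 < t) :
    (Yseq (s + 3)).ncard ≤ (itf t s ((Y1 ∪ Z).ncard))^[s + 2] ((Y1 ∪ Z).ncard) := by
  set n := (Y1 ∪ Z).ncard with hn
  have hbase : (Yseq 1).ncard = n := by
    rw [show (1:ℕ) = 0 + 1 from rfl, D.hY 0 (by omega), D.h0Y, D.h0U]
  have key : ∀ i, i ≤ s + 2 → (Yseq (i + 1)).ncard ≤ (itf t s n)^[i] n := by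
    intro i hi
    induction i with
    | zero =>
      rw [Function.iterate_zero_apply]
      show (Yseq 1).ncard ≤ n
      exact hbase.le
    | succ k ih =>
      have hk : k ≤ s + 2 := by omega
      rw [Function.iterate_succ_apply']
      have hY2 : Yseq (k + 1 + 1) = Yseq (k + 1) ∪ U (k + 1) := D.hY (k+1) (by omega)
      have hle1 : (Yseq (k + 1 + 1)).ncard ≤ (Yseq (k+1)).ncard + (U (k+1)).ncard := by
        rw [hY2]; exact Set.ncard_union_le _ _
      have hUb : (U (k+1)).ncard ≤ (t - 1) * ((Yseq (k+1)).ncard).choose s := by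
        rw [D.hU (k+1) (by omega) (by omega)]
        exact nge_bound ht hG _
      have hch : (t-1) * ((Yseq (k+1)).ncard).choose s
          ≤ (t-1) * ((itf t s n)^[k] n).choose s :=
        Nat.mul_le_mul_left _ (Nat.choose_le_choose s (ih hk))
      have hfx : itf t s n ((itf t s n)^[k] n)
          = (itf t s n)^[k] n + n + (t-1) * ((itf t s n)^[k] n).choose s := rfl
      rw [hfx]
      have hik := ih hk
      omega
  exact key (s + 2) (le_refl _)

lemma part4 (c' : V → ℤ) (hc' : IsLColoring (Lseq (s + 3)) c') (v : V)
    (hne : (monoComponent G c' v ∩ (Y1 ∪ Z)).Nonempty) :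
    monoComponent G c' v ⊆ Yseq (s + 3) ∧
    ((c' v = (ℓ : ℤ) ∨ c' v ∈ highC s r) → monoComponent G c' v ⊆ Y1) := by
  have hmem : ∀ m, m ∈ monoComponent G c' v ↔ ∃ (hm : c' m = c' v),
      (G.induce {u | c' u = c' v}).Reachable ⟨m, hm⟩ ⟨v, rfl⟩ := by
    intro m
    constructor
    · rintro ⟨⟨m', hm'⟩, hsupp, rfl⟩
      exact ⟨hm', SimpleGraph.ConnectedComponent.exact
        ((SimpleGraph.ConnectedComponent.mem_supp_iff _ _).1 hsupp)⟩
    · rintro ⟨hm, hr⟩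
      exact ⟨⟨m, hm⟩, by
        rw [SimpleGraph.ConnectedComponent.mem_supp_iff]
        exact SimpleGraph.ConnectedComponent.sound hr, rfl⟩
  obtain ⟨z, hzM, hzY⟩ := hne
  obtain ⟨hz1, hzr⟩ := (hmem z).1 hzM
  -- claim 2
  have claim2 : (c' v = (ℓ : ℤ) ∨ c' v ∈ highC s r) → monoComponent G c' v ⊆ Y1 := by
    intro hcol
    have hcolFC : ∀ i : ℕ, c' v ∈ FC s r ℓ i := by
      intro i
      rcases hcol with h | h
      · rw [h]; exact Finset.mem_insert_self _ _
      · exact Finset.mem_insert_of_mem (Finset.mem_insert_of_mem h)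
    have hzY1 : z ∈ Y1 := by
      by_contra hz
      have hzZ : z ∈ Z := by
        rcases hzY with h | h
        · exact absurd h hz
        · exact h
      have hU0 : z ∈ U 0 := D.h0U ▸ hzZ
      have hY0 : z ∉ Yseq 0 := D.h0Y ▸ hz
      obtain ⟨_, _, hsub⟩ := D.birth_prop (Nat.zero_le _) hU0 hY0
      have := hsub (hc' z)
      rw [Finset.mem_sdiff] at this
      apply this.2
      rw [hz1]
      exact hcolFC 0
    intro m hmM
    obtain ⟨hm1, hmr⟩ := (hmem m).1 hmM
    have hzm : (G.induce {u | c' u = c' v}).Reachable ⟨z, hz1⟩ ⟨m, hm1⟩ := hzr.trans hmr.symm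
    obtain ⟨p⟩ := hzm
    refine walk_closed ?_ _ _ p hzY1
    intro a b ha hb hadj haY1
    refine D.step_high c' hc' hadj ?_ ?_ haY1
    · rw [ha, hb]
    · rw [show c' a = c' v from ha]
      exact hcol
  constructor
  · by_cases hcol : c' v = (ℓ : ℤ) ∨ c' v ∈ highC s r
    · intro m hm
      exact D.Ymono (Nat.zero_le _) (le_refl _) (D.h0Y ▸ claim2 hcol hm)
    · push_neg at hcol
      obtain ⟨hne1, hne2⟩ := hcol
      have hcv : c' v ∈ Lseq (s + 3) v := hc' v
      have hicc := D.hRL.1 v (D.part2 v hcv)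
      rw [Finset.mem_Icc] at hicc
      have hub : c' v ≤ (s : ℤ) + 2 := by
        by_contra hub
        push_neg at hub
        apply hne2
        show c' v ∈ Finset.Icc ((s:ℤ)+3) ((s:ℤ)+2+(r:ℤ))
        rw [Finset.mem_Icc]
        omega
      set n := (c' v).toNat with hnn
      have hn : ((n : ℕ) : ℤ) = c' v := Int.toNat_of_nonneg (by omega)
      have hn1 : 1 ≤ n := by omega
      have hn2 : n ≤ s + 2 := by omega
      have hzT : z ∈ Yseq n := by
        have : z ∈ Yseq 1 := by
          rw [show (1:ℕ) = 0 + 1 from rfl, D.hY 0 (by omega), D.h0Y, D.h0U]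
          exact hzY
        exact D.Ymono hn1 (by omega) this
      intro m hmM
      obtain ⟨hm1, hmr⟩ := (hmem m).1 hmM
      have hzm : (G.induce {u | c' u = c' v}).Reachable ⟨z, hz1⟩ ⟨m, hm1⟩ := hzr.trans hmr.symm
      obtain ⟨p⟩ := hzm
      have hmT : m ∈ Yseq n := by
        refine walk_closed ?_ _ _ p hzT
        intro a b ha hb hadj haT
        refine D.step_low c' hc' hn1 hn2 hadj ?_ ?_ haT
        · rw [show c' a = c' v from ha]; exact hn.symm
        · rw [show c' b = c' v from hb]; exact hn.symm
      exact D.Ymono (show n ≤ s + 3 by omega) (le_refl _) hmT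
  · exact claim2

lemma part5 (hG : ¬ HasSubgraphCopy G (completeBipartiteGraph (Fin s) (Fin t)))
    (ht : 0 < t) (A B : G.Subgraph) (hsep : IsSeparation G A B)
    (hZ : Z ⊆ A.verts ∩ B.verts) :
    (Yseq (s + 3) ∩ A.verts).ncard ≤
      (itf t s ((A.verts ∩ B.verts).ncard + (Y1 ∩ A.verts).ncard))^[s + 2]
        ((A.verts ∩ B.verts).ncard + (Y1 ∩ A.verts).ncard) := by
  set m := (A.verts ∩ B.verts).ncard + (Y1 ∩ A.verts).ncard with hm
  have hnbr : ∀ x ∈ A.verts, x ∉ A.verts ∩ B.verts → ∀ u, G.Adj x u → u ∈ A.verts := by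
    intro x hxA hxAB u hadj
    have htop : (A ⊔ B).Adj x u := by
      rw [hsep.1]; exact hadj
    rcases SimpleGraph.Subgraph.sup_adj.1 htop with h | h
    · exact h.snd_mem
    · exact absurd ⟨hxA, h.fst_mem⟩ hxAB
  have hbase : (Yseq 1 ∩ A.verts).ncard ≤ m := by
    have hsub : Yseq 1 ∩ A.verts ⊆ (Y1 ∩ A.verts) ∪ (A.verts ∩ B.verts) := by
      rintro x ⟨hx1, hxA⟩
      rw [show (1:ℕ) = 0 + 1 from rfl, D.hY 0 (by omega), D.h0Y, D.h0U] at hx1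
      rcases hx1 with h | h
      · exact Or.inl ⟨h, hxA⟩
      · exact Or.inr (hZ h)
    have h1 : (Yseq 1 ∩ A.verts).ncard ≤ ((Y1 ∩ A.verts) ∪ (A.verts ∩ B.verts)).ncard :=
      Set.ncard_le_ncard hsub (Set.toFinite _)
    have h2 := Set.ncard_union_le (Y1 ∩ A.verts) (A.verts ∩ B.verts)
    omega
  have hstep : ∀ i, 1 ≤ i → i ≤ s + 2 →
      Yseq (i+1) ∩ A.verts ⊆ (Yseq i ∩ A.verts) ∪ (A.verts ∩ B.verts) ∪
        Nge G s (Yseq i ∩ A.verts) := by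
    intro i hi1 hi2
    rintro x ⟨hx1, hxA⟩
    rw [D.hY i hi2] at hx1
    rcases hx1 with h | h
    · exact Or.inl (Or.inl ⟨h, hxA⟩)
    · by_cases hxAB : x ∈ A.verts ∩ B.verts
      · exact Or.inl (Or.inr hxAB)
      · rw [D.hU i hi1 hi2] at h
        obtain ⟨hxY, hxs⟩ := h
        refine Or.inr ⟨fun hmem => hxY hmem.1, ?_⟩
        have hseteq : G.neighborSet x ∩ (Yseq i ∩ A.verts) = G.neighborSet x ∩ Yseq i := by
          ext u
          constructor
          · rintro ⟨h1, h2, _⟩; exact ⟨h1, h2⟩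
          · rintro ⟨h1, h2⟩; exact ⟨h1, h2, hnbr x hxA hxAB u h1⟩
        rw [hseteq]
        exact hxs
  have key : ∀ i, i ≤ s + 2 → (Yseq (i + 1) ∩ A.verts).ncard ≤ (itf t s m)^[i] m := by
    intro i hi
    induction i with
    | zero =>
      rw [Function.iterate_zero_apply]
      show (Yseq 1 ∩ A.verts).ncard ≤ m
      exact hbase
    | succ k ih =>
      have hk : k ≤ s + 2 := by omega
      rw [Function.iterate_succ_apply']
      have hsub := hstep (k+1) (by omega) (by omega)
      have h1 : (Yseq (k + 1 + 1) ∩ A.verts).ncard ≤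
          ((Yseq (k+1) ∩ A.verts) ∪ (A.verts ∩ B.verts) ∪
            Nge G s (Yseq (k+1) ∩ A.verts)).ncard :=
        Set.ncard_le_ncard hsub (Set.toFinite _)
      have h2 := Set.ncard_union_le ((Yseq (k+1) ∩ A.verts) ∪ (A.verts ∩ B.verts))
        (Nge G s (Yseq (k+1) ∩ A.verts))
      have h3 := Set.ncard_union_le (Yseq (k+1) ∩ A.verts) (A.verts ∩ B.verts)
      have hUb : (Nge G s (Yseq (k+1) ∩ A.verts)).ncard ≤
          (t - 1) * ((Yseq (k+1) ∩ A.verts).ncard).choose s := nge_bound ht hG _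
      have hch : (t-1) * ((Yseq (k+1) ∩ A.verts).ncard).choose s
          ≤ (t-1) * ((itf t s m)^[k] m).choose s :=
        Nat.mul_le_mul_left _ (Nat.choose_le_choose s (ih hk))
      have hfx : itf t s m ((itf t s m)^[k] m)
          = (itf t s m)^[k] m + m + (t-1) * ((itf t s m)^[k] m).choose s := rfl
      rw [hfx]
      have hik := ih hk
      omega
  exact key (s + 2) (le_refl _)

end GD

end Aux18

/-- Properties of a `(Z,ℓ)`-growth of an `(s,Y₁,ℓ,r)`-list-assignment. -/
theorem stmt18 (s t : ℕ) (hs : 0 < s) (ht : 0 < t) :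
    ∃ h : ℕ → ℕ, ∀ (V : Type) [Fintype V] (G : SimpleGraph V),
      ¬ HasSubgraphCopy G (completeBipartiteGraph (Fin s) (Fin t)) →
      ∀ (Z Y1 : Set V) (ℓ r : ℕ), ℓ ≤ s + 2 →
      ∀ L : V → Finset ℤ, IsRList G s Y1 ℓ r L →
      ∀ (L' : V → Finset ℤ) (Y1' : Set V), IsZGrowth G s Y1 ℓ r L Z L' Y1' →
        IsRList G s Y1' ℓ r L' ∧
        (∀ v, L' v ⊆ L v) ∧
        Y1'.ncard ≤ h ((Y1 ∪ Z).ncard) ∧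
        (∀ c' : V → ℤ, IsLColoring L' c' → ∀ v : V,
          (monoComponent G c' v ∩ (Y1 ∪ Z)).Nonempty →
          monoComponent G c' v ⊆ Y1' ∧
          ((c' v = (ℓ : ℤ) ∨ c' v ∈ Finset.Icc ((s : ℤ) + 3) ((s : ℤ) + 2 + (r : ℤ))) →
            monoComponent G c' v ⊆ Y1)) ∧
        (∀ Lc : Set (G.Subgraph × G.Subgraph), IsLocation G Lc →
          (∀ p ∈ Lc, Z ⊆ p.1.verts ∩ p.2.verts) →
          ∀ p ∈ Lc, (Y1' ∩ p.1.verts).ncard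
            ≤ h ((p.1.verts ∩ p.2.verts).ncard + (Y1 ∩ p.1.verts).ncard)) := by
  classical
  use fun n => (itf t s n)^[s + 2] n
  intro V _ G hG Z Y1 ℓ r hℓ L hRL L' Y1' hgrowth
  obtain ⟨Lseq, Yseq, U, h0L, h0Y, h0U, hU, hY, hPP, hL', hY'⟩ := hgrowth
  subst hL'
  subst hY'
  have D : GD G s ℓ r Y1 Z L Lseq Yseq U :=
    ⟨h0L, h0Y, h0U, hU, hY, fun i hi => (hPP i hi).1, fun i hi => (hPP i hi).2, hRL⟩
  refine ⟨D.part1, D.part2, D.part3 hG ht, ?_, ?_⟩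
  · intro c' hc' v hne
    obtain ⟨h1, h2⟩ := D.part4 c' hc' v hne
    exact ⟨h1, fun h => h2 (by exact h)⟩
  · intro Lc hLoc hZsub p hp
    exact D.part5 hG ht p.1 p.2 (hLoc.1 p hp) (hZsub p hp)
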